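/- arXiv:2106.11675 — 2 statements merged into one kernel-verified Lean document; each statement's English description precedes it below -/
import Mathlib

section
/- Let G be a finite simple graph and let (C₁,F₁) and (C₂,F₂) be antlers in G. Then |C₁ ∩ F₂| = |C₂ ∩ F₁|; moreover both quantities equal fvs(G[F₁ ∪ F₂]). -/
variable {V : Type*}

/-- The subgraph of `G` with edges restricted to the vertex set `S`
(kept on the same vertex type; vertices outside `S` become isolated).
Used to model the induced subgraph `G[S]` and vertex deletion `G - X = G[Xᶜ]`. -/
def graphRestrict (G : SimpleGraph V) (S : Set V) : SimpleGraph V where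
  Adj u v := G.Adj u v ∧ u ∈ S ∧ v ∈ S
  symm := ⟨fun _ _ h => ⟨h.1.symm, h.2.2, h.2.1⟩⟩
  loopless := ⟨fun _ h => G.irrefl h.1⟩

/-- `X` is a feedback vertex set of `G`: deleting `X` leaves an acyclic graph. -/
def IsFVS (G : SimpleGraph V) (X : Set V) : Prop :=
  (graphRestrict G Xᶜ).IsAcyclic

/-- The feedback vertex number of `G`: the minimum size of a feedback vertex set. -/
noncomputable def fvs (G : SimpleGraph V) : ℕ :=
  sInf {n | ∃ X : Set V, IsFVS G X ∧ X.ncard = n}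

/-- `X` is a minimum feedback vertex set of `G`. -/
def IsMinFVS (G : SimpleGraph V) (X : Set V) : Prop :=
  IsFVS G X ∧ ∀ Y : Set V, IsFVS G Y → X.ncard ≤ Y.ncard

/-- `(C, F)` is a feedback vertex cut in `G`: `C` and `F` are disjoint, `G[F]` is a
forest, and every tree of `G[F]` has at most one edge to `V(G) \ (C ∪ F)` (i.e. any two
edges from the same component of `G[F]` to the outside coincide). -/
def IsFVC (G : SimpleGraph V) (C F : Set V) : Prop :=
  Disjoint C F ∧ (graphRestrict G F).IsAcyclic ∧
    ∀ u₁ u₂ w₁ w₂ : V, u₁ ∈ F → u₂ ∈ F →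
      (graphRestrict G F).Reachable u₁ u₂ →
      w₁ ∉ C ∪ F → w₂ ∉ C ∪ F → G.Adj u₁ w₁ → G.Adj u₂ w₂ →
      u₁ = u₂ ∧ w₁ = w₂

/-- `(C, F)` is an antler in `G`: a feedback vertex cut with `|C| ≤ fvs(G[C ∪ F])`. -/
def IsAntler (G : SimpleGraph V) (C F : Set V) : Prop :=
  IsFVC G C F ∧ C.ncard ≤ fvs (graphRestrict G (C ∪ F))

/-- A graph `H` together with a vertex set `C` "has order `z`" if every connected
component `H'` of `H` satisfies `fvs(H') = |C ∩ V(H')| ≤ z`. -/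
def HasCertOrder {W : Type*} (H : SimpleGraph W) (C : Set W) (z : ℕ) : Prop :=
  ∀ v : W,
    fvs (graphRestrict H {u | H.Reachable u v}) = (C ∩ {u | H.Reachable u v}).ncard ∧
    (C ∩ {u | H.Reachable u v}).ncard ≤ z

/-- `H` is a `C`-certificate in `G`: a subgraph of `G` for which `C` is a minimum
feedback vertex set. -/
def IsCCertificate (G : SimpleGraph V) (C : Set V) (H : G.Subgraph) : Prop :=
  C ⊆ H.verts ∧ IsMinFVS H.coe {u : H.verts | (u : V) ∈ C}

/-- `H` is a `C`-certificate of order `z` in `G`. -/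
def IsCCertificateOfOrder (G : SimpleGraph V) (C : Set V) (H : G.Subgraph) (z : ℕ) : Prop :=
  IsCCertificate G C H ∧ HasCertOrder H.coe {u : H.verts | (u : V) ∈ C} z

/-- `(C, F)` is a `z`-antler in `G`: an antler such that `G[C ∪ F]` contains a
`C`-certificate of order `z`. -/
def IsZAntler (G : SimpleGraph V) (z : ℕ) (C F : Set V) : Prop :=
  IsAntler G C F ∧ ∃ H : G.Subgraph, H.verts ⊆ C ∪ F ∧ IsCCertificateOfOrder G C H z

/-- The function `f_r(x) = 2x³ + 3x² - x`. -/
def fr (x : ℕ) : ℕ := 2 * x ^ 3 + 3 * x ^ 2 - x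

/-- A feedback vertex cut `(C, F)` is reducible if `|F| > f_r(|C|)`. -/
def IsReducibleFVC (G : SimpleGraph V) (C F : Set V) : Prop :=
  IsFVC G C F ∧ fr C.ncard < F.ncard

/-- A feedback vertex cut `(C, F)` is simple if `|F| ≤ 2 f_r(|C|)` and either
`G[F]` is connected, or all trees of `G[F]` have a common neighbor `v` and there is a
single-tree feedback vertex cut `(C, F₂)` with `v ∈ F₂ \ F` and `F ⊆ F₂`. -/
def IsSimpleFVC (G : SimpleGraph V) (C F : Set V) : Prop :=
  IsFVC G C F ∧ F.ncard ≤ 2 * fr C.ncard ∧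
    ((G.induce F).Connected ∨
      ∃ v : V,
        (∀ u ∈ F, ∃ u' ∈ F, (graphRestrict G F).Reachable u u' ∧ G.Adj u' v) ∧
        ∃ F₂ : Set V, IsFVC G C F₂ ∧ (G.induce F₂).Connected ∧ v ∈ F₂ \ F ∧ F ⊆ F₂)

/-- `G` contains a `v`-flower of order `k`: `k` cycles whose vertex sets pairwise
intersect exactly in `{v}`. -/
def HasFlower (G : SimpleGraph V) (v : V) (k : ℕ) : Prop :=
  ∃ c : Fin k → G.Walk v v,
    (∀ i, (c i).IsCycle) ∧
    ∀ i j, i ≠ j → {x | x ∈ (c i).support} ∩ {x | x ∈ (c j).support} = {v}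

/-- `G` contains `k` pairwise vertex-disjoint cycles. -/
def HasDisjointCycles (G : SimpleGraph V) (k : ℕ) : Prop :=
  ∃ (b : Fin k → V) (c : ∀ i, G.Walk (b i) (b i)),
    (∀ i, (c i).IsCycle) ∧
    ∀ i j, i ≠ j → Disjoint {x | x ∈ (c i).support} {x | x ∈ (c j).support}

/-- `(C, F)` is a 1-antler in `G` (self-contained definition): `G[F]` is a forest,
every tree of `G[F]` has at most one edge to `V(G) \ (C ∪ F)`, and `G[C ∪ F]`
contains `|C|` pairwise vertex-disjoint cycles. -/
def IsOneAntler (G : SimpleGraph V) (C F : Set V) : Prop :=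
  IsFVC G C F ∧ HasDisjointCycles (graphRestrict G (C ∪ F)) C.ncard

/-- `C 1, F 1, …, C ℓ, F ℓ` is a `z`-antler-sequence for `G`: the sets are pairwise
disjoint and each `(C i, F i)` is a `z`-antler in `G` minus all earlier sets. -/
def IsAntlerSeq (G : SimpleGraph V) (z ℓ : ℕ) (C F : Fin ℓ → Set V) : Prop :=
  (∀ i j, i ≠ j → Disjoint (C i) (C j)) ∧
  (∀ i j, i ≠ j → Disjoint (F i) (F j)) ∧
  (∀ i j, Disjoint (C i) (F j)) ∧
  ∀ i, IsZAntler (graphRestrict G (⋃ j, ⋃ (_ : j < i), (C j ∪ F j))ᶜ) z (C i) (F i)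

/-!
Write `G[S]` for `graphRestrict G S`. For antlers `(C₁, F₁)` and `(C₂, F₂)` we show
`fvs G[F₁ ∪ F₂] ≤ |C₂ ∩ F₁| ≤ fvs G[F₁ ∪ F₂]` (and symmetrically), which gives everything.

Upper bound: removing `C₂ ∩ F₁` from `F₁ ∪ F₂` leaves a set avoiding `C₂` whose part outside
`F₂` lies in the forest `F₁`. A cycle avoiding `C₂` that meets a tree of `G[F₂]` without
staying inside `F₂` would have to enter and leave that tree along two distinct edges to the
outside of `C₂ ∪ F₂`, which the feedback vertex cut `(C₂, F₂)` forbids.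

Lower bound: if `X` is a minimum FVS of `G[F₁ ∪ F₂]`, then `(C₁ \ F₂) ∪ X` is an FVS of
`G[C₁ ∪ F₁]`, so `|C₁| ≤ |C₁ \ F₂| + |X|` because `(C₁, F₁)` is an antler.
-/

open SimpleGraph

section FeedbackVertexSets

variable {G : SimpleGraph V}

lemma graphRestrict_mono {S T : Set V} (h : S ⊆ T) : graphRestrict G S ≤ graphRestrict G T :=
  fun _ _ hadj => ⟨hadj.1, h hadj.2.1, h hadj.2.2⟩

lemma isFVS_graphRestrict_iff {S X : Set V} :
    IsFVS (graphRestrict G S) X ↔ (graphRestrict G (S \ X)).IsAcyclic := by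
  have hgraph : graphRestrict (graphRestrict G S) Xᶜ = graphRestrict G (S \ X) := by
    ext u v
    simp only [graphRestrict, Set.mem_compl_iff, Set.mem_sdiff]
    tauto
  rw [IsFVS, hgraph]

lemma isFVS_univ (G : SimpleGraph V) : IsFVS G Set.univ := by
  rintro v (_ | ⟨hadj, _⟩) hc
  · exact hc.ne_nil rfl
  · exact hadj.2.1 (Set.mem_univ _)

lemma fvs_le_ncard {X : Set V} (h : IsFVS G X) : fvs G ≤ X.ncard :=
  Nat.sInf_le ⟨X, h, rfl⟩

lemma exists_isFVS_ncard_eq_fvs (G : SimpleGraph V) : ∃ X, IsFVS G X ∧ X.ncard = fvs G :=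
  Nat.sInf_mem (s := {n | ∃ X, IsFVS G X ∧ X.ncard = n}) ⟨_, Set.univ, isFVS_univ G, rfl⟩

lemma SimpleGraph.Walk.IsCycle.not_isAcyclic_graphRestrict {S T : Set V} {v : V}
    {c : (graphRestrict G S).Walk v v} (hc : c.IsCycle) (hT : ∀ x ∈ c.support, x ∈ T) :
    ¬ (graphRestrict G (S ∩ T)).IsAcyclic := by
  refine fun hacyc => hacyc (c.transfer _ ?_) (hc.transfer _)
  intro e he
  induction e using Sym2.ind with
  | _ a b =>
    have hadj := c.adj_of_mem_edges he
    exact (graphRestrict G (S ∩ T)).mem_edgeSet.mpr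
      ⟨hadj.1, ⟨hadj.2.1, hT a (c.fst_mem_support_of_mem_edges he)⟩,
        ⟨hadj.2.2, hT b (c.snd_mem_support_of_mem_edges he)⟩⟩

end FeedbackVertexSets

section FeedbackVertexCuts

variable {G : SimpleGraph V} {C F S : Set V}

lemma SimpleGraph.Walk.exists_exit_edge {x y : V} (p : (graphRestrict G S).Walk x y)
    (hx : x ∈ F) (hy : y ∉ F) :
    ∃ u w, u ∈ F ∧ w ∈ S \ F ∧ (graphRestrict G F).Reachable x u ∧ G.Adj u w ∧
      s(u, w) ∈ p.edges := by
  induction p with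
  | nil => exact absurd hx hy
  | @cons a b _ hab q ih =>
    by_cases hb : b ∈ F
    · obtain ⟨u, w, hu, hw, hbu, huw, hmem⟩ := ih hb hy
      have hab' : (graphRestrict G F).Adj a b := ⟨hab.1, hx, hb⟩
      exact ⟨u, w, hu, hw, hab'.reachable.trans hbu, huw, by simp [hmem]⟩
    · exact ⟨a, b, hx, ⟨hab.2.2, hb⟩, .refl _, hab.1, by simp⟩

lemma IsFVC.notMem_of_mem_support_of_isTrail (hFVC : IsFVC G C F) (hSC : Disjoint S C)
    {x y : V} {p : (graphRestrict G S).Walk x y} (hp : p.IsTrail) (hx : x ∉ F) (hy : y ∉ F) :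
    ∀ v ∈ p.support, v ∉ F := by
  have hout : ∀ a ∈ S \ F, a ∉ C ∪ F := fun a ha haCF =>
    haCF.elim (Set.disjoint_left.mp hSC ha.1) ha.2
  induction p with
  | nil => simpa using hx
  | @cons a b _ hab q ih =>
    rw [Walk.isTrail_cons] at hp
    have hb : b ∉ F := by
      intro hb
      -- entering the tree of `b` along `ab`, the trail must leave it along a different edge
      obtain ⟨u, w, hu, hw, hbu, huw, hmem⟩ := q.exists_exit_edge hb hy
      obtain ⟨rfl, rfl⟩ := hFVC.2.2 b u a w hb hu hbu (hout a ⟨hab.2.1, hx⟩) (hout w hw)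
        hab.1.symm huw
      exact hp.2 (Sym2.eq_swap ▸ hmem)
    simpa [hx] using ih hp.1 hb hy

theorem IsFVC.isAcyclic_graphRestrict (hFVC : IsFVC G C F) (hSC : Disjoint S C)
    (hacyc : (graphRestrict G (S \ F)).IsAcyclic) : (graphRestrict G S).IsAcyclic := by
  classical
  intro v c hc
  by_cases hout : ∃ x ∈ c.support, x ∉ F
  · obtain ⟨x, hxc, hxF⟩ := hout
    have hc' := hc.rotate hxc
    refine hc'.not_isAcyclic_graphRestrict (T := Fᶜ) ?_ hacyc
    exact hFVC.notMem_of_mem_support_of_isTrail hSC hc'.isTrail hxF hxF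
  · push Not at hout
    exact hc.not_isAcyclic_graphRestrict hout
      (hFVC.2.1.anti (graphRestrict_mono Set.inter_subset_right))

theorem IsFVC.isFVS_inter {Fa : Set V} (hFVC : IsFVC G C F)
    (hFa : (graphRestrict G Fa).IsAcyclic) : IsFVS (graphRestrict G (Fa ∪ F)) (C ∩ Fa) := by
  rw [isFVS_graphRestrict_iff]
  refine hFVC.isAcyclic_graphRestrict ?_ (hFa.anti (graphRestrict_mono ?_))
  · rw [Set.disjoint_left]
    rintro a ⟨haF | haF, haC⟩ haC'
    · exact haC ⟨haC', haF⟩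
    · exact Set.disjoint_left.mp hFVC.1 haC' haF
  · rintro a ⟨⟨haF | haF, -⟩, haF'⟩
    exacts [haF, absurd haF haF']

end FeedbackVertexCuts

theorem IsAntler.ncard_inter_le_fvs [Finite V] {G : SimpleGraph V} {C F : Set V}
    (h : IsAntler G C F) (F' : Set V) : (C ∩ F').ncard ≤ fvs (graphRestrict G (F ∪ F')) := by
  obtain ⟨X, hX, hXcard⟩ := exists_isFVS_ncard_eq_fvs (graphRestrict G (F ∪ F'))
  have hY : IsFVS (graphRestrict G (C ∪ F)) ((C \ F') ∪ X) := by
    rw [isFVS_graphRestrict_iff] at hX ⊢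
    refine hX.anti (graphRestrict_mono ?_)
    intro v
    simp only [Set.mem_sdiff, Set.mem_union]
    tauto
  have hC : (C ∩ F').ncard + (C \ F').ncard ≤ (C \ F').ncard + X.ncard :=
    calc (C ∩ F').ncard + (C \ F').ncard = C.ncard := Set.ncard_inter_add_ncard_sdiff_eq_ncard _ _
      _ ≤ fvs (graphRestrict G (C ∪ F)) := h.2
      _ ≤ ((C \ F') ∪ X).ncard := fvs_le_ncard hY
      _ ≤ (C \ F').ncard + X.ncard := Set.ncard_union_le _ _
  omega

theorem stmt4 [Fintype V] (G : SimpleGraph V) (C₁ F₁ C₂ F₂ : Set V)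
    (h₁ : IsAntler G C₁ F₁) (h₂ : IsAntler G C₂ F₂) :
    (C₁ ∩ F₂).ncard = (C₂ ∩ F₁).ncard ∧
    (C₁ ∩ F₂).ncard = fvs (graphRestrict G (F₁ ∪ F₂)) := by
  have hup₁ : fvs (graphRestrict G (F₁ ∪ F₂)) ≤ (C₁ ∩ F₂).ncard := by
    rw [Set.union_comm]
    exact fvs_le_ncard (h₁.1.isFVS_inter h₂.1.2.1)
  have hup₂ : fvs (graphRestrict G (F₁ ∪ F₂)) ≤ (C₂ ∩ F₁).ncard :=
    fvs_le_ncard (h₂.1.isFVS_inter h₁.1.2.1)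
  have hlow₁ := h₁.ncard_inter_le_fvs F₂
  have hlow₂ := h₂.ncard_inter_le_fvs F₁
  rw [Set.union_comm] at hlow₂
  omega
end

section
/- Let G be a finite simple graph, let (C,F) be a feedback vertex cut in G, and let v ∈ C be such that the induced subgraph G[F ∪ {v}] contains a v-flower of order |C| + 1. Then every minimum feedback vertex set of G contains v. -/
variable {V : Type*}

/-!
If a minimum feedback vertex set `S` avoided `v`, each of the `|C| + 1` petals of the flower
would have to be hit inside `F`, at pairwise distinct vertices, so `|S ∩ F| > |C|`.
On the other hand `(S \ F) ∪ C` is again a feedback vertex set: a cycle avoiding `C` cannot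
cross between `F` and the rest of the graph, since it would have to leave the tree of `G[F]`
it passes through along two distinct edges, while a feedback vertex cut allows only one.
It is smaller than `S`, as `|C| < |S ∩ F|`.
-/

open SimpleGraph

variable {G : SimpleGraph V}

lemma graphRestrict_le (G : SimpleGraph V) (S : Set V) : graphRestrict G S ≤ G :=
  fun _ _ h => h.1

lemma mem_of_reachable_graphRestrict {S : Set V} {u x : V}
    (h : (graphRestrict G S).Reachable u x) (hu : u ∈ S) : x ∈ S := by
  by_contra hx
  obtain ⟨p⟩ := h
  obtain ⟨d, -, -, hd⟩ := p.exists_boundary_dart S hu hx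
  exact hd d.adj.2.2

lemma mem_of_mem_support_graphRestrict {S : Set V} {u : V}
    {p : (graphRestrict G S).Walk u u} (hp : p.IsCycle) {x : V} (hx : x ∈ p.support) : x ∈ S := by
  classical
  have hu : u ∈ S := by
    cases p with
    | nil => exact absurd rfl hp.ne_nil
    | cons h _ => exact h.2.1
  exact mem_of_reachable_graphRestrict (p.takeUntil x hx).reachable hu

lemma isAcyclic_graphRestrict_iff {S : Set V} :
    (graphRestrict G S).IsAcyclic ↔
      ∀ u (p : G.Walk u u), p.IsCycle → ∃ x ∈ p.support, x ∉ S := by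
  refine ⟨fun hS u p hp => ?_, fun hS u p hp => ?_⟩
  · by_contra! hpS
    have hedges : ∀ e ∈ p.edges, e ∈ (graphRestrict G S).edgeSet := by
      intro e he
      induction e using Sym2.ind with
      | _ x y =>
        exact ⟨p.adj_of_mem_edges he, hpS x (p.fst_mem_support_of_mem_edges he),
          hpS y (p.snd_mem_support_of_mem_edges he)⟩
    exact hS (p.transfer _ hedges) (hp.transfer hedges)
  · obtain ⟨x, hx, hxS⟩ := hS u (p.mapLe (graphRestrict_le G S)) (hp.mapLe _)
    rw [Walk.support_mapLe_eq_support] at hx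
    exact hxS (mem_of_mem_support_graphRestrict hp hx)

lemma isFVS_iff_forall_isCycle {X : Set V} :
    IsFVS G X ↔ ∀ u (p : G.Walk u u), p.IsCycle → ∃ x ∈ p.support, x ∈ X := by
  simp only [IsFVS, isAcyclic_graphRestrict_iff, Set.mem_compl_iff, not_not]

lemma IsFVS.graphRestrict {X : Set V} (hX : IsFVS G X) (T : Set V) :
    IsFVS (graphRestrict G T) (X ∩ T) := by
  rw [isFVS_iff_forall_isCycle] at hX ⊢
  intro u p hp
  obtain ⟨x, hx, hxX⟩ := hX u (p.mapLe (graphRestrict_le G T)) (hp.mapLe _)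
  rw [Walk.support_mapLe_eq_support] at hx
  exact ⟨x, hx, hxX, mem_of_mem_support_graphRestrict hp hx⟩

lemma HasFlower.le_ncard_of_isFVS [Finite V] {v : V} {k : ℕ} (hfl : HasFlower G v k)
    {X : Set V} (hX : IsFVS G X) (hv : v ∉ X) : k ≤ X.ncard := by
  obtain ⟨c, hc, hpetals⟩ := hfl
  choose s hs hsX using fun i => isFVS_iff_forall_isCycle.1 hX v (c i) (hc i)
  have hs_inj : Function.Injective s := by
    intro i j hij
    by_contra hne
    have hmem : s i ∈ {x | x ∈ (c i).support} ∩ {x | x ∈ (c j).support} := ⟨hs i, hij ▸ hs j⟩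
    rw [hpetals i j hne, Set.mem_singleton_iff] at hmem
    exact hv (hmem ▸ hsX i)
  calc k = (Set.range s).ncard := by rw [Set.ncard_range_of_injective hs_inj, Nat.card_fin]
    _ ≤ X.ncard := Set.ncard_le_ncard (Set.range_subset_iff.2 hsX)

namespace IsFVC

variable {C F : Set V}

lemma support_subset_of_isCycle (h : IsFVC G C F) {u : V} {p : G.Walk u u} (hp : p.IsCycle)
    (hpC : ∀ x ∈ p.support, x ∉ C) (hu : u ∈ F) : ∀ x ∈ p.support, x ∈ F := by
  classical
  intro w hw
  by_contra hwF
  set K : Set V := {x | (graphRestrict G F).Reachable u x}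
  have hKF : ∀ x ∈ K, x ∈ F := fun x hx => mem_of_reachable_graphRestrict hx hu
  have hwK : w ∉ K := fun hw => hwF (hKF w hw)
  -- both arcs of `p` between `u` and `w` leave the tree `K` of `G[F]` containing `u`
  obtain ⟨d₁, hd₁, hd₁K, hd₁K'⟩ := (p.takeUntil w hw).exists_boundary_dart K .rfl hwK
  obtain ⟨d₂, hd₂, hd₂K, hd₂K'⟩ := (p.dropUntil w hw).reverse.exists_boundary_dart K .rfl hwK
  have houtside : ∀ d : G.Dart, d.fst ∈ K → d.snd ∉ K → d.snd ∈ p.support → d.snd ∉ C ∪ F := by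
    rintro d hdK hdK' hd (hdC | hdF)
    · exact hpC _ hd hdC
    · exact hdK' (hdK.trans (Adj.reachable ⟨d.adj, hKF _ hdK, hdF⟩))
  obtain ⟨hfst, hsnd⟩ := h.2.2 d₁.fst d₂.fst d₁.snd d₂.snd (hKF _ hd₁K) (hKF _ hd₂K)
    (hd₁K.symm.trans hd₂K)
    (houtside d₁ hd₁K hd₁K' (p.support_takeUntil_subset_support hw
      (Walk.dart_snd_mem_support_of_mem_darts _ hd₁)))
    (houtside d₂ hd₂K hd₂K' (p.support_dropUntil_subset_support hw
      (by simpa using Walk.dart_snd_mem_support_of_mem_darts _ hd₂)))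
    d₁.adj d₂.adj
  have hd : d₁ = d₂ := Dart.ext _ _ (Prod.ext hfst hsnd)
  have hnodup : ((p.takeUntil w hw).edges ++ (p.dropUntil w hw).edges).Nodup := by
    rw [← Walk.edges_append, p.take_spec hw]
    exact hp.isCircuit.isTrail.edges_nodup
  have hd₂' : d₂.edge ∈ (p.dropUntil w hw).edges := by
    have := List.mem_map_of_mem (f := Dart.edge) hd₂
    rwa [← Walk.edges, Walk.edges_reverse, List.mem_reverse] at this
  exact List.disjoint_of_nodup_append hnodup (List.mem_map_of_mem hd₁) (hd ▸ hd₂')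

lemma support_subset_or_disjoint_of_isCycle (h : IsFVC G C F) {u : V} {p : G.Walk u u}
    (hp : p.IsCycle) (hpC : ∀ x ∈ p.support, x ∉ C) :
    (∀ x ∈ p.support, x ∈ F) ∨ ∀ x ∈ p.support, x ∉ F := by
  classical
  by_cases hdisj : ∀ x ∈ p.support, x ∉ F
  · exact .inr hdisj
  obtain ⟨x, hx, hxF⟩ : ∃ x ∈ p.support, x ∈ F := by simpa using hdisj
  refine .inl fun y hy => ?_
  simpa [hy] using h.support_subset_of_isCycle (hp.rotate hx) (by simpa using hpC) hxF y

lemma isFVS_diff_union (h : IsFVC G C F) {X : Set V} (hX : IsFVS G X) :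
    IsFVS G (X \ F ∪ C) := by
  rw [isFVS_iff_forall_isCycle] at hX ⊢
  intro u p hp
  by_contra! hpX
  have hpC : ∀ x ∈ p.support, x ∉ C := fun x hx hxC => hpX x hx (.inr hxC)
  rcases h.support_subset_or_disjoint_of_isCycle hp hpC with hpF | hpF
  · obtain ⟨x, hx, hxF⟩ := isAcyclic_graphRestrict_iff.1 h.2.1 u p hp
    exact hxF (hpF x hx)
  · obtain ⟨x, hx, hxX⟩ := hX u p hp
    exact hpX x hx (.inl ⟨hxX, hpF x hx⟩)

end IsFVC

theorem stmt13_general [Fintype V] (G : SimpleGraph V) (C F : Set V) (v : V)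
    (h : IsFVC G C F)
    (hfl : HasFlower (graphRestrict G (F ∪ {v})) v (C.ncard + 1)) :
    ∀ S : Set V, IsMinFVS G S → v ∈ S := by
  intro S hS
  by_contra hvS
  have hpetals : C.ncard + 1 ≤ (S ∩ F).ncard := by
    refine (hfl.le_ncard_of_isFVS (hS.1.graphRestrict (F ∪ {v})) (by simp [hvS])).trans ?_
    refine Set.ncard_le_ncard fun x ⟨hxS, hx⟩ => ⟨hxS, ?_⟩
    rcases hx with hxF | rfl
    exacts [hxF, absurd hxS hvS]
  have hmin := hS.2 _ (h.isFVS_diff_union hS.1)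
  have hunion := Set.ncard_union_le (S \ F) C
  have hsplit := Set.ncard_inter_add_ncard_sdiff_eq_ncard S F
  omega

theorem stmt13 [Fintype V] (G : SimpleGraph V) (C F : Set V) (v : V)
    (h : IsFVC G C F) (hv : v ∈ C)
    (hfl : HasFlower (graphRestrict G (F ∪ {v})) v (C.ncard + 1)) :
    ∀ S : Set V, IsMinFVS G S → v ∈ S :=
  stmt13_general G C F v h hfl
end
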